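/- Fix z = (x,y) ∈ ℝ^d × ℝ, a minimal true parameter θ⁰ with k⁰ units, a reparameterization (t, (q_j)) with q_j > 0 and group sums 1, a non-identifiable part ψ_t, and a direction h = Φ_t − Φ_t⁰. If φ is differentiable, then the function s ↦ f_{(Φ_t⁰ + s h, ψ_t)}(z)/f_{θ⁰}(z) is differentiable at s = 0 with derivative equal to e(z) · [β − β⁰ + Σ_{i=1}^{k⁰} sᵢ φ(bᵢ⁰ + wᵢ⁰ᵀx) + Σ_{i=1}^{k⁰} Σ_{j=t_{i−1}+1}^{t_i} q_j (b_j − bᵢ⁰) aᵢ⁰ φ'(bᵢ⁰ + wᵢ⁰ᵀx) + Σ_{i=1}^{k⁰} Σ_{j=t_{i−1}+1}^{t_i} q_j (w_j − wᵢ⁰)ᵀx aᵢ⁰ φ'(bᵢ⁰ + wᵢ⁰ᵀx) + Σ_{j=t_{k⁰}+1}^{k} a_j φ(b_j + w_jᵀx)], where e(z) := (y − F_{θ⁰}(x))/σ². -/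

import Mathlib

open Finset
open scoped RealInnerProductSpace

/-- The true MLP regression function `F_{θ⁰}(x) = β⁰ + Σ_{i=1}^{k⁰} aᵢ⁰ φ(bᵢ⁰ + wᵢ⁰ᵀx)`
(groups indexed by `i ∈ {0, …, k⁰−1}`). -/
noncomputable def trueF {d : ℕ} (φ : ℝ → ℝ) (k0 : ℕ) (β0 : ℝ) (a0 b0 : ℕ → ℝ)
    (w0 : ℕ → EuclideanSpace ℝ (Fin d)) (x : EuclideanSpace ℝ (Fin d)) : ℝ :=
  β0 + ∑ i ∈ Finset.range k0, a0 i * φ (b0 i + ⟪w0 i, x⟫)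

/-- The reparameterized regression function along the segment `Φ_t⁰ + s·(Φ_t − Φ_t⁰)`,
with the non-identifiable part `ψ_t = ((q_j), tail (b_j, w_j))` held fixed: the bias is
`β⁰ + s(β−β⁰)`, within group `i` the unit `j` has parameters
`(bᵢ⁰ + s(b_j − bᵢ⁰), wᵢ⁰ + s(w_j − wᵢ⁰))` and output weight `(s·sᵢ + aᵢ⁰)·q_j`,
and the extra units `j ∈ [t_{k⁰}, k)` have output weights `s·a_j`. -/
noncomputable def repFPath {d : ℕ} (φ : ℝ → ℝ) (k0 k : ℕ) (t : ℕ → ℕ)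
    (β0 : ℝ) (a0 b0 : ℕ → ℝ) (w0 : ℕ → EuclideanSpace ℝ (Fin d))
    (qq : ℕ → ℝ) (β : ℝ) (bb sv aa : ℕ → ℝ) (ww : ℕ → EuclideanSpace ℝ (Fin d))
    (s : ℝ) (x : EuclideanSpace ℝ (Fin d)) : ℝ :=
  (β0 + s * (β - β0)) +
    ∑ i ∈ Finset.range k0, (s * sv i + a0 i) *
      ∑ j ∈ Finset.Ico (t i) (t (i + 1)),
        qq j * φ ((b0 i + s * (bb j - b0 i)) + ⟪w0 i + s • (ww j - w0 i), x⟫) +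
    ∑ j ∈ Finset.Ico (t k0) k, (s * aa j) * φ (bb j + ⟪ww j, x⟫)

/-- The model density with regression function `F`:
`(2πσ²)^{-1/2} exp(−(y − F(x))²/(2σ²)) q(x)`. -/
noncomputable def densF {d : ℕ} (σ2 : ℝ) (q : EuclideanSpace ℝ (Fin d) → ℝ)
    (F : EuclideanSpace ℝ (Fin d) → ℝ) (z : EuclideanSpace ℝ (Fin d) × ℝ) : ℝ :=
  (Real.sqrt (2 * Real.pi * σ2))⁻¹ *
    Real.exp (-(z.2 - F z.1) ^ 2 / (2 * σ2)) * q z.1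

/-! The Gaussian normalizing constants and `q(x)` cancel in the likelihood ratio, leaving
`exp ((r₀² − r(s)²) / (2σ²))` with residuals `r(s) = y − G(Φ_t⁰ + s h, ψ_t, x)` and
`r₀ = y − F_{θ⁰}(x)`. Since the `q_j` of each group sum to one, the path passes through
`F_{θ⁰}` at `s = 0`, so `r(0) = r₀` and the derivative is `(r₀ / σ²) · ∂ₛG`; the latter is
computed unit by unit with the chain rule, each hidden unit's argument being affine in `s`. -/
theorem HasDerivAt.comp_add_mul_zero {φ : ℝ → ℝ} {φ' c : ℝ} (hφ : HasDerivAt φ φ' c) (m : ℝ) :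
    HasDerivAt (fun s : ℝ => φ (c + s * m)) (φ' * m) 0 := by
  have hlin : HasDerivAt (fun s : ℝ => c + s * m) m 0 := by
    simpa using ((hasDerivAt_id (0 : ℝ)).mul_const m).const_add c
  have hφ₀ : HasDerivAt φ φ' (c + 0 * m) := by rwa [zero_mul, add_zero]
  exact hφ₀.comp 0 hlin

theorem add_mul_add_inner_smul_sub {E : Type*} [NormedAddCommGroup E] [InnerProductSpace ℝ E]
    (b b' s : ℝ) (w w' x : E) :
    (b + s * (b' - b)) + ⟪w + s • (w' - w), x⟫ = (b + ⟪w, x⟫) + s * ((b' - b) + ⟪w' - w, x⟫) := by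
  rw [inner_add_left, real_inner_smul_left]
  ring

theorem repFPath_zero {d : ℕ} (φ : ℝ → ℝ) (k0 k : ℕ) (t : ℕ → ℕ)
    (β0 : ℝ) (a0 b0 : ℕ → ℝ) (w0 : ℕ → EuclideanSpace ℝ (Fin d)) (qq : ℕ → ℝ)
    (hqsum : ∀ i < k0, ∑ j ∈ Finset.Ico (t i) (t (i + 1)), qq j = 1)
    (β : ℝ) (bb sv aa : ℕ → ℝ) (ww : ℕ → EuclideanSpace ℝ (Fin d)) :
    repFPath φ k0 k t β0 a0 b0 w0 qq β bb sv aa ww 0 = trueF φ k0 β0 a0 b0 w0 := by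
  funext x
  simp only [repFPath, trueF, zero_mul, zero_smul, zero_add, add_zero, sum_const_zero]
  refine congrArg (β0 + ·) (sum_congr rfl fun i hi => ?_)
  rw [← sum_mul, hqsum i (mem_range.mp hi), one_mul]

theorem densF_div_densF {d : ℕ} {σ2 : ℝ} (hσ2 : 0 < σ2) {q : EuclideanSpace ℝ (Fin d) → ℝ}
    {z : EuclideanSpace ℝ (Fin d) × ℝ} (hq : q z.1 ≠ 0) (F G : EuclideanSpace ℝ (Fin d) → ℝ) :
    densF σ2 q F z / densF σ2 q G z =
      Real.exp (-(z.2 - F z.1) ^ 2 / (2 * σ2) - -(z.2 - G z.1) ^ 2 / (2 * σ2)) := by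
  have hnorm : (Real.sqrt (2 * Real.pi * σ2))⁻¹ ≠ 0 := by positivity
  rw [densF, densF, mul_div_mul_right _ _ hq, mul_div_mul_left _ _ hnorm, Real.exp_sub]

theorem hasDerivAt_densF_div_densF {d : ℕ} {σ2 : ℝ} (hσ2 : 0 < σ2)
    {q : EuclideanSpace ℝ (Fin d) → ℝ} {z : EuclideanSpace ℝ (Fin d) × ℝ} (hq : q z.1 ≠ 0)
    {F : ℝ → EuclideanSpace ℝ (Fin d) → ℝ} {F0 : EuclideanSpace ℝ (Fin d) → ℝ} {B : ℝ}
    (hF : HasDerivAt (fun s => F s z.1) B 0) (hF0 : F 0 z.1 = F0 z.1) :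
    HasDerivAt (fun s => densF σ2 q (F s) z / densF σ2 q F0 z)
      ((z.2 - F0 z.1) / σ2 * B) 0 := by
  simp only [densF_div_densF hσ2 hq]
  have hexponent := ((((hF.const_sub z.2).fun_pow 2).fun_neg).div_const (2 * σ2)).sub_const
    (-(z.2 - F0 z.1) ^ 2 / (2 * σ2))
  convert hexponent.exp using 1
  rw [hF0, sub_self, Real.exp_zero, one_mul]
  field_simp
  ring

theorem hasDerivAt_repFPath_zero {d : ℕ} (φ D1φ : ℝ → ℝ) (hφ : ∀ u, HasDerivAt φ (D1φ u) u)
    (k0 k : ℕ) (t : ℕ → ℕ) (β0 : ℝ) (a0 b0 : ℕ → ℝ) (w0 : ℕ → EuclideanSpace ℝ (Fin d))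
    (qq : ℕ → ℝ) (hqsum : ∀ i < k0, ∑ j ∈ Finset.Ico (t i) (t (i + 1)), qq j = 1)
    (β : ℝ) (bb sv aa : ℕ → ℝ) (ww : ℕ → EuclideanSpace ℝ (Fin d))
    (x : EuclideanSpace ℝ (Fin d)) :
    HasDerivAt (fun s => repFPath φ k0 k t β0 a0 b0 w0 qq β bb sv aa ww s x)
      ((β - β0) + (∑ i ∈ Finset.range k0, sv i * φ (b0 i + ⟪w0 i, x⟫)) +
        (∑ i ∈ Finset.range k0, ∑ j ∈ Finset.Ico (t i) (t (i + 1)),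
          qq j * (bb j - b0 i) * a0 i * D1φ (b0 i + ⟪w0 i, x⟫)) +
        (∑ i ∈ Finset.range k0, ∑ j ∈ Finset.Ico (t i) (t (i + 1)),
          qq j * ⟪ww j - w0 i, x⟫ * a0 i * D1φ (b0 i + ⟪w0 i, x⟫)) +
        ∑ j ∈ Finset.Ico (t k0) k, aa j * φ (bb j + ⟪ww j, x⟫)) 0 := by
  have hbias : HasDerivAt (fun s : ℝ => β0 + s * (β - β0)) (β - β0) 0 := by
    simpa using ((hasDerivAt_id (0 : ℝ)).mul_const (β - β0)).const_add β0
  have hgroup : ∀ i ∈ range k0, HasDerivAt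
      (fun s : ℝ => (s * sv i + a0 i) * ∑ j ∈ Ico (t i) (t (i + 1)),
        qq j * φ ((b0 i + s * (bb j - b0 i)) + ⟪w0 i + s • (ww j - w0 i), x⟫))
      (sv i * φ (b0 i + ⟪w0 i, x⟫) +
        ∑ j ∈ Ico (t i) (t (i + 1)), qq j * (bb j - b0 i) * a0 i * D1φ (b0 i + ⟪w0 i, x⟫) +
        ∑ j ∈ Ico (t i) (t (i + 1)), qq j * ⟪ww j - w0 i, x⟫ * a0 i * D1φ (b0 i + ⟪w0 i, x⟫))
      0 := by
    intro i hi
    simp only [add_mul_add_inner_smul_sub]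
    have hweight : HasDerivAt (fun s : ℝ => s * sv i + a0 i) (sv i) 0 := by
      simpa using ((hasDerivAt_id (0 : ℝ)).mul_const (sv i)).add_const (a0 i)
    have hunits := HasDerivAt.fun_sum (u := Ico (t i) (t (i + 1))) fun j _ =>
      ((hφ (b0 i + ⟪w0 i, x⟫)).comp_add_mul_zero ((bb j - b0 i) + ⟪ww j - w0 i, x⟫)).const_mul
        (qq j)
    refine (hweight.mul hunits).congr_deriv ?_
    simp only [zero_mul, zero_add, add_zero]
    rw [← sum_mul, hqsum i (mem_range.mp hi), one_mul, mul_sum, add_assoc, ← sum_add_distrib]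
    exact congrArg _ (sum_congr rfl fun j _ => by ring)
  have hextra : HasDerivAt (fun s : ℝ => ∑ j ∈ Ico (t k0) k, (s * aa j) * φ (bb j + ⟪ww j, x⟫))
      (∑ j ∈ Ico (t k0) k, aa j * φ (bb j + ⟪ww j, x⟫)) 0 :=
    HasDerivAt.fun_sum fun j _ => by
      simpa using ((hasDerivAt_id (0 : ℝ)).mul_const (aa j)).mul_const (φ (bb j + ⟪ww j, x⟫))
  refine ((hbias.add (HasDerivAt.fun_sum hgroup)).add hextra).congr_deriv ?_
  simp only [sum_add_distrib]
  ring

theorem deriv_likelihood_ratio_at_zero_general {d : ℕ}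
    (φ D1φ : ℝ → ℝ) (hφ : ∀ u, HasDerivAt φ (D1φ u) u)
    (σ2 : ℝ) (hσ2 : 0 < σ2)
    (q : EuclideanSpace ℝ (Fin d) → ℝ) (hq : ∀ x, 0 < q x)
    (k0 k : ℕ)
    (β0 : ℝ) (a0 b0 : ℕ → ℝ) (w0 : ℕ → EuclideanSpace ℝ (Fin d))
    (t : ℕ → ℕ)
    (qq : ℕ → ℝ)
    (hqsum : ∀ i < k0, ∑ j ∈ Finset.Ico (t i) (t (i + 1)), qq j = 1)
    (β : ℝ) (bb sv aa : ℕ → ℝ) (ww : ℕ → EuclideanSpace ℝ (Fin d))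
    (z : EuclideanSpace ℝ (Fin d) × ℝ) :
    HasDerivAt
      (fun s => densF σ2 q (repFPath φ k0 k t β0 a0 b0 w0 qq β bb sv aa ww s) z /
        densF σ2 q (trueF φ k0 β0 a0 b0 w0) z)
      (((z.2 - trueF φ k0 β0 a0 b0 w0 z.1) / σ2) *
        ((β - β0) + (∑ i ∈ Finset.range k0, sv i * φ (b0 i + ⟪w0 i, z.1⟫)) +
          (∑ i ∈ Finset.range k0, ∑ j ∈ Finset.Ico (t i) (t (i + 1)),
            qq j * (bb j - b0 i) * a0 i * D1φ (b0 i + ⟪w0 i, z.1⟫)) +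
          (∑ i ∈ Finset.range k0, ∑ j ∈ Finset.Ico (t i) (t (i + 1)),
            qq j * ⟪ww j - w0 i, z.1⟫ * a0 i * D1φ (b0 i + ⟪w0 i, z.1⟫)) +
          ∑ j ∈ Finset.Ico (t k0) k, aa j * φ (bb j + ⟪ww j, z.1⟫)))
      0 :=
  hasDerivAt_densF_div_densF hσ2 (hq z.1).ne'
    (hasDerivAt_repFPath_zero φ D1φ hφ k0 k t β0 a0 b0 w0 qq hqsum β bb sv aa ww z.1)
    (congrFun (repFPath_zero φ k0 k t β0 a0 b0 w0 qq hqsum β bb sv aa ww) z.1)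

/-- for fixed `z = (x,y)`, a minimal true parameter `θ⁰`, a
reparameterization `(t, (q_j))` and a direction `h = Φ_t − Φ_t⁰`, if `φ` is
differentiable then `s ↦ f_{(Φ_t⁰ + s h, ψ_t)}(z)/f_{θ⁰}(z)` is differentiable at
`s = 0` with derivative `e(z)` times the displayed bracket. -/
theorem deriv_likelihood_ratio_at_zero {d : ℕ}
    (φ D1φ : ℝ → ℝ) (hφ : ∀ u, HasDerivAt φ (D1φ u) u)
    (σ2 : ℝ) (hσ2 : 0 < σ2)
    (q : EuclideanSpace ℝ (Fin d) → ℝ) (hq : ∀ x, 0 < q x)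
    (k0 k : ℕ) (hk01 : 1 ≤ k0) (hk : k0 ≤ k)
    (β0 : ℝ) (a0 b0 : ℕ → ℝ) (w0 : ℕ → EuclideanSpace ℝ (Fin d))
    (ha0 : ∀ i < k0, a0 i ≠ 0)
    (hdist : ∀ i < k0, ∀ i' < k0, i ≠ i' → (b0 i, w0 i) ≠ (b0 i', w0 i'))
    (t : ℕ → ℕ) (ht0 : t 0 = 0) (htmono : ∀ i < k0, t i < t (i + 1)) (htk : t k0 ≤ k)
    (qq : ℕ → ℝ) (hqq : ∀ j, 0 < qq j)
    (hqsum : ∀ i < k0, ∑ j ∈ Finset.Ico (t i) (t (i + 1)), qq j = 1)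
    (β : ℝ) (bb sv aa : ℕ → ℝ) (ww : ℕ → EuclideanSpace ℝ (Fin d))
    (z : EuclideanSpace ℝ (Fin d) × ℝ) :
    HasDerivAt
      (fun s => densF σ2 q (repFPath φ k0 k t β0 a0 b0 w0 qq β bb sv aa ww s) z /
        densF σ2 q (trueF φ k0 β0 a0 b0 w0) z)
      (((z.2 - trueF φ k0 β0 a0 b0 w0 z.1) / σ2) *
        ((β - β0) + (∑ i ∈ Finset.range k0, sv i * φ (b0 i + ⟪w0 i, z.1⟫)) +
          (∑ i ∈ Finset.range k0, ∑ j ∈ Finset.Ico (t i) (t (i + 1)),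
            qq j * (bb j - b0 i) * a0 i * D1φ (b0 i + ⟪w0 i, z.1⟫)) +
          (∑ i ∈ Finset.range k0, ∑ j ∈ Finset.Ico (t i) (t (i + 1)),
            qq j * ⟪ww j - w0 i, z.1⟫ * a0 i * D1φ (b0 i + ⟪w0 i, z.1⟫)) +
          ∑ j ∈ Finset.Ico (t k0) k, aa j * φ (bb j + ⟪ww j, z.1⟫)))
      0 :=
  deriv_likelihood_ratio_at_zero_general φ D1φ hφ σ2 hσ2 q hq k0 k β0 a0 b0 w0 t qq hqsum β bb sv aa
    ww z
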